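/- arXiv:1111.2853 — 7 statements merged into one kernel-verified Lean document; each statement's English description precedes it below -/
import Mathlib

section
/- Every complex root z of the polynomial f(X) = a_0 X^n + a_1 X^{n-1} + ... + a_n with a_0 ≠ 0 satisfies |z| ≤ (2^{1/n} - 1)^{-1} · max_{1 ≤ k ≤ n} |a_k / (a_0 · C(n,k))|^{1/k}. -/
/-!
Put `M` for the maximum and `r = ‖z‖`. The bound on each quotient gives
`‖a k‖ ≤ ‖a 0‖ * C(n,k) * M ^ k`, so isolating `a 0 * z ^ n` in the root equation yields
`r ^ n ≤ ∑_{k ≥ 1} C(n,k) M^k r^(n-k) = (M + r) ^ n - r ^ n`. Hence `2 r ^ n ≤ (M + r) ^ n`,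
and taking `n`-th roots, `2 ^ (1/n) * r ≤ M + r`.
-/

open Finset

theorem Finset.sum_range_succ_eq_add_sum_Icc {M : Type*} [AddCommMonoid M] (f : ℕ → M) (n : ℕ) :
    ∑ k ∈ range (n + 1), f k = f 0 + ∑ k ∈ Icc 1 n, f k := by
  rw [sum_range_eq_add_Ico f (Nat.add_one_pos n), Ico_add_one_right_eq_Icc]

theorem norm_le_mul_pow_of_rpow_one_div_le {K : Type*} [NormedField K] {a c : K} {M : ℝ} {k : ℕ}
    (hk : k ≠ 0) (hc : c ≠ 0) (h : ‖a / c‖ ^ ((1 : ℝ) / k) ≤ M) : ‖a‖ ≤ ‖c‖ * M ^ k := by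
  have hpow : ‖a / c‖ ≤ M ^ k := by
    rw [← Real.rpow_inv_natCast_pow (norm_nonneg _) hk, ← one_div]
    exact pow_le_pow_left₀ (by positivity) h k
  rwa [norm_div, div_le_iff₀' (norm_pos_iff.mpr hc)] at hpow

theorem norm_pow_le_sum_of_sum_eq_zero {K : Type*} [NormedField K] {n : ℕ} {a : ℕ → K}
    {b : ℕ → ℝ} {z : K} (ha : a 0 ≠ 0) (hz : ∑ k ∈ range (n + 1), a k * z ^ (n - k) = 0)
    (hb : ∀ k ∈ Icc 1 n, ‖a k‖ ≤ ‖a 0‖ * b k) :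
    ‖z‖ ^ n ≤ ∑ k ∈ Icc 1 n, b k * ‖z‖ ^ (n - k) := by
  rw [sum_range_succ_eq_add_sum_Icc, Nat.sub_zero, add_eq_zero_iff_eq_neg] at hz
  refine le_of_mul_le_mul_left ?_ (norm_pos_iff.mpr ha)
  calc ‖a 0‖ * ‖z‖ ^ n = ‖∑ k ∈ Icc 1 n, a k * z ^ (n - k)‖ := by
        rw [← norm_pow, ← norm_mul, hz, norm_neg]
    _ ≤ ∑ k ∈ Icc 1 n, ‖a 0‖ * b k * ‖z‖ ^ (n - k) := by
        refine (norm_sum_le _ _).trans (sum_le_sum fun k hk => ?_)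
        rw [norm_mul, norm_pow]
        gcongr
        exact hb k hk
    _ = ‖a 0‖ * ∑ k ∈ Icc 1 n, b k * ‖z‖ ^ (n - k) := by
        simp only [mul_sum, mul_assoc]

theorem two_mul_pow_le_add_pow {R : Type*} [CommSemiring R] [PartialOrder R] [IsOrderedRing R]
    {n : ℕ} {x y : R} (h : y ^ n ≤ ∑ k ∈ Icc 1 n, n.choose k * x ^ k * y ^ (n - k)) :
    2 * y ^ n ≤ (x + y) ^ n := by
  have hbinom : (x + y) ^ n = y ^ n + ∑ k ∈ Icc 1 n, n.choose k * x ^ k * y ^ (n - k) := by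
    rw [add_pow, sum_range_succ_eq_add_sum_Icc]
    simp only [pow_zero, one_mul, Nat.sub_zero, Nat.choose_zero_right, Nat.cast_one, mul_one]
    congr 1
    exact sum_congr rfl fun k _ => by ring
  rw [hbinom, two_mul]
  exact add_le_add_right h _

theorem le_inv_rpow_sub_one_mul_of_two_mul_pow_le {n : ℕ} {x y : ℝ} (hn : n ≠ 0) (hx : 0 ≤ x)
    (hy : 0 ≤ y) (h : 2 * y ^ n ≤ (x + y) ^ n) : y ≤ ((2 : ℝ) ^ ((1 : ℝ) / n) - 1)⁻¹ * x := by
  have hroot : (2 : ℝ) ^ ((1 : ℝ) / n) * y ≤ x + y := by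
    by_contra! hlt
    have := pow_lt_pow_left₀ hlt (by positivity) hn
    rw [mul_pow, one_div, Real.rpow_inv_natCast_pow zero_le_two hn] at this
    exact this.not_ge h
  have hpos : 0 < (2 : ℝ) ^ ((1 : ℝ) / n) - 1 :=
    sub_pos.mpr (Real.one_lt_rpow one_lt_two (by positivity))
  rw [le_inv_mul_iff₀ hpos]
  linarith

/-- Every complex root `z` of `f(X) = a_0 X^n + a_1 X^{n-1} + ... + a_n`
with `a_0 ≠ 0` satisfies
`|z| ≤ (2^{1/n} - 1)⁻¹ * max_{1 ≤ k ≤ n} |a_k / (a_0 * C(n,k))|^{1/k}`. -/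
theorem root_bound (n : ℕ) (hn : 1 ≤ n) (a : ℕ → ℂ) (ha : a 0 ≠ 0) (z : ℂ)
    (hz : (∑ k ∈ Finset.range (n + 1), a k * z ^ (n - k)) = 0) :
    ‖z‖ ≤ ((2 : ℝ) ^ ((1 : ℝ) / n) - 1)⁻¹ *
      (Finset.Icc 1 n).sup' (Finset.nonempty_Icc.mpr hn)
        (fun k => (‖a k / (a 0 * (n.choose k))‖) ^ ((1 : ℝ) / k)) := by
  set M := (Finset.Icc 1 n).sup' (Finset.nonempty_Icc.mpr hn)
    (fun k => (‖a k / (a 0 * (n.choose k))‖) ^ ((1 : ℝ) / k))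
  have hM : 0 ≤ M := by
    refine le_trans ?_ (le_sup' _ (left_mem_Icc.mpr hn))
    positivity
  have hcoef : ∀ k ∈ Icc 1 n, ‖a k‖ ≤ ‖a 0‖ * (n.choose k * M ^ k) := by
    intro k hk
    obtain ⟨hk1, hkn⟩ := mem_Icc.mp hk
    have hchoose : (n.choose k : ℂ) ≠ 0 := Nat.cast_ne_zero.mpr (Nat.choose_pos hkn).ne'
    simpa only [norm_mul, Complex.norm_natCast, mul_assoc] using
      norm_le_mul_pow_of_rpow_one_div_le (by omega) (mul_ne_zero ha hchoose)
        (le_sup' (fun k => ‖a k / (a 0 * (n.choose k))‖ ^ ((1 : ℝ) / k)) hk)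
  have hroot := norm_pow_le_sum_of_sum_eq_zero ha hz hcoef
  exact le_inv_rpow_sub_one_mul_of_two_mul_pow_le (by omega) hM (norm_nonneg z)
    (two_mul_pow_le_add_pow hroot)
end

section
/- For n ≥ 2, the discriminant of the trinomial X^n + pX + q equals (-1)^{n(n-1)/2} n^n q^{n-1} + (-1)^{(n-1)(n-2)/2} (n-1)^{n-1} p^n. -/
open Polynomial

/-! With `f = X^n + pX + q` we have `f' = n g` for the monic `g = X^(n-1) + p/n`, so
`∏_{f(α)=0} f'(α) = n^n ∏_α g(α) = n^n ∏_{g(β)=0} f(β)`: both products are `±∏_{α,β} (α - β)`,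
and the sign `(-1)^(n(n-1))` is `1`. At a root `β` of `g` the trinomial collapses to the linear
`f(β) = c β + q` with `c = (n-1)p/n`, and `∏_β (c β + q) = (-c)^(n-1) g(-q/c)`. -/

/-- The discriminant of a monic polynomial over `ℂ`, defined as
`∏_{i<j} (α_i - α_j)^2 = (-1)^{n(n-1)/2} ∏_i f'(α_i)` where the `α_i` are the
roots with multiplicity. -/
noncomputable def disc (f : Polynomial ℂ) : ℂ :=
  (-1 : ℂ) ^ (f.natDegree * (f.natDegree - 1) / 2) *
    (f.roots.map (fun r => Polynomial.eval r (Polynomial.derivative f))).prod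

namespace Polynomial

theorem prod_roots_map_eval_comm {R : Type*} [CommRing R] [IsDomain R] {f g : R[X]}
    (hf : f.Monic) (hf' : f.Splits) (hg : g.Monic) (hg' : g.Splits) :
    (f.roots.map g.eval).prod =
      (-1) ^ (f.natDegree * g.natDegree) * (g.roots.map f.eval).prod := by
  rw [← map_sub_sprod_roots_eq_prod_map_eval _ _ hg hg',
    map_sub_roots_sprod_eq_prod_map_eval _ _ hf hf', hf'.natDegree_eq_card_roots,
    hg'.natDegree_eq_card_roots]
  ring

variable {K : Type*} [Field K]

theorem prod_roots_X_pow_add_C_map_mul_add {m : ℕ} (hm : m ≠ 0) {a : K}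
    (hs : (X ^ m + C a).Splits) (c q : K) :
    ((X ^ m + C a).roots.map fun b => c * b + q).prod = q ^ m + (-c) ^ m * a := by
  have hcard : (X ^ m + C a).roots.card = m := by
    rw [← hs.natDegree_eq_card_roots, natDegree_X_pow_add_C]
  rcases eq_or_ne c 0 with rfl | hc
  · simp [hcard, zero_pow hm]
  · calc ((X ^ m + C a).roots.map fun b => c * b + q).prod
        = ((X ^ m + C a).roots.map fun b => -c * (-q / c - b)).prod := by
          congr 1
          exact Multiset.map_congr rfl fun b _ => by field_simp; ring
      _ = (-c) ^ m * (X ^ m + C a).eval (-q / c) := by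
          rw [Multiset.prod_map_mul, hs.eval_eq_prod_roots_of_monic (monic_X_pow_add_C a hm)]
          simp [hcard]
      _ = q ^ m + (-c) ^ m * a := by
          simp only [eval_add, eval_pow, eval_X, eval_C, mul_add, ← mul_pow]
          field_simp

theorem eval_trinomial_of_pow_eq {m : ℕ} {a b : K} (hb : b ^ m = -a) (p q : K) :
    (X ^ (m + 1) + C p * X + C q).eval b = (p - a) * b + q := by
  simp only [eval_add, eval_pow, eval_mul, eval_X, eval_C, pow_succ, hb]
  ring

theorem derivative_trinomial [CharZero K] (m : ℕ) (p q : K) :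
    derivative (X ^ (m + 1) + C p * X + C q) = C ((m : K) + 1) * (X ^ m + C (p / (m + 1))) := by
  simp only [derivative_add, derivative_X_pow, derivative_mul, derivative_C, derivative_X]
  rw [mul_add, ← C_mul, mul_div_cancel₀ _ (Nat.cast_add_one_ne_zero m)]
  simp

theorem monic_trinomial {n : ℕ} (hn : 1 < n) (p q : K) : (X ^ n + C p * X + C q).Monic := by
  rw [add_assoc]
  exact monic_X_pow_add (degree_linear_le.trans_lt (by exact_mod_cast hn))

theorem natDegree_trinomial {n : ℕ} (hn : 1 < n) (p q : K) :
    (X ^ n + C p * X + C q).natDegree = n := by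
  rw [add_assoc, natDegree_add_eq_left_of_degree_lt, natDegree_X_pow]
  rw [degree_X_pow]
  exact degree_linear_le.trans_lt (by exact_mod_cast hn)

theorem prod_roots_trinomial_eval_derivative [CharZero K] [IsAlgClosed K] {m : ℕ} (hm : m ≠ 0)
    (p q : K) :
    ((X ^ (m + 1) + C p * X + C q).roots.map (derivative (X ^ (m + 1) + C p * X + C q)).eval).prod
      = ((m : K) + 1) ^ (m + 1) * q ^ m + (-(m : K)) ^ m * p ^ (m + 1) := by
  set f : K[X] := X ^ (m + 1) + C p * X + C q
  set g : K[X] := X ^ m + C (p / (m + 1))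
  have hf : f.Monic := monic_trinomial (by omega) p q
  have hg : g.Monic := monic_X_pow_add_C _ hm
  have hfdeg : f.natDegree = m + 1 := natDegree_trinomial (by omega) p q
  calc (f.roots.map (derivative f).eval).prod
      = ((m : K) + 1) ^ (m + 1) * (f.roots.map g.eval).prod := by
        simp only [f, derivative_trinomial, eval_mul, eval_C, Multiset.prod_map_mul,
          Multiset.map_const', Multiset.prod_replicate]
        rw [← (IsAlgClosed.splits f).natDegree_eq_card_roots, hfdeg]
    _ = ((m : K) + 1) ^ (m + 1) * (g.roots.map f.eval).prod := by
        rw [prod_roots_map_eval_comm hf (IsAlgClosed.splits f) hg (IsAlgClosed.splits g), hfdeg,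
          natDegree_X_pow_add_C, mul_comm (m + 1), (Nat.even_mul_succ_self m).neg_one_pow, one_mul]
    _ = ((m : K) + 1) ^ (m + 1) * (g.roots.map fun b => (p - p / (m + 1)) * b + q).prod := by
        congr 2
        refine Multiset.map_congr rfl fun b hb => eval_trinomial_of_pow_eq ?_ p q
        have hroot : b ^ m + p / (m + 1) = 0 := by
          simpa [g] using (mem_roots hg.ne_zero).1 hb
        exact eq_neg_of_add_eq_zero_left hroot
    _ = ((m : K) + 1) ^ (m + 1) * q ^ m + (-(m : K)) ^ m * p ^ (m + 1) := by
        have hc : p - p / (m + 1) = m * p / (m + 1) := by field_simp; ring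
        rw [prod_roots_X_pow_add_C_map_mul_add hm (IsAlgClosed.splits g), hc, ← neg_div, ← neg_mul,
          div_pow, mul_pow]
        field_simp
        ring

end Polynomial

/-- For `n ≥ 2`, the discriminant of `X^n + pX + q` equals
`(-1)^{n(n-1)/2} n^n q^{n-1} + (-1)^{(n-1)(n-2)/2} (n-1)^{n-1} p^n`. -/
theorem disc_trinomial (n : ℕ) (hn : 2 ≤ n) (p q : ℂ) :
    disc (X ^ n + C p * X + C q) =
      (-1 : ℂ) ^ (n * (n - 1) / 2) * (n : ℂ) ^ n * q ^ (n - 1) +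
        (-1 : ℂ) ^ ((n - 1) * (n - 2) / 2) * ((n - 1 : ℕ) : ℂ) ^ (n - 1) * p ^ n := by
  obtain ⟨m, rfl⟩ : ∃ m, n = m + 1 := ⟨n - 1, by omega⟩
  have hsq : (-1 : ℂ) ^ m * (-1) ^ m = 1 := by rw [← pow_add]; exact Even.neg_one_pow ⟨m, rfl⟩
  -- `Nat.triangle_succ` splits off `(-1)^(n-1)`, which cancels the sign of `(-(n-1))^(n-1)`.
  rw [disc, natDegree_trinomial hn, prod_roots_trinomial_eval_derivative (by omega),
    Nat.triangle_succ, pow_add, neg_pow (m : ℂ)]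
  simp only [Nat.add_sub_cancel]
  push_cast
  linear_combination (-1 : ℂ) ^ (m * (m - 1) / 2) * (m : ℂ) ^ m * p ^ (m + 1) * hsq
end

section
/- For n ≥ 2 and fixed integers a_1, ..., a_{n-1}, the discriminant Δ(a_1, ..., a_{n-1}, a_n) of X^n + a_1 X^{n-1} + ... + a_n, viewed as a polynomial in the single variable a_n, has degree n-1 and leading coefficient (-1)^{n(n-1)/2} n^n. -/
open Polynomial

/-!
For monic `p` of degree `n`, `disc (p + t) = ± Res(p + t, p')`. Swapping the arguments of the
resultant (the sign `(-1) ^ (n * (n - 1))` is `1`) and evaluating over the roots of `p'`, which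
has leading coefficient `n`, gives `Res(p + t, p') = n ^ n * ∏_{p'(β) = 0} (p(β) + t)`: visibly
a polynomial in `t` of degree `n - 1` with leading coefficient `n ^ n`. It has integer
coefficients because it is the specialisation at `T = t` of the Sylvester determinant of `p + T`
and its derivative over `ℤ[T]`.
-/

lemma Polynomial.Monic.add_C {R : Type*} [Semiring R] {p : R[X]} (hp : p.Monic)
    (hpos : 0 < p.natDegree) (c : R) : (p + C c).Monic :=
  hp.add_of_left (degree_C_le.trans_lt (natDegree_pos_iff_degree_pos.mp hpos))

lemma degree_sum_C_mul_X_pow_sub_lt {R : Type*} [Semiring R] (c : ℕ → R) (n : ℕ) :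
    (∑ i ∈ Finset.Icc 1 (n - 1), C (c i) * X ^ (n - i)).degree < (n : WithBot ℕ) := by
  refine (degree_sum_le _ _).trans_lt
    ((Finset.sup_lt_iff (WithBot.bot_lt_coe n)).2 fun i hi => ?_)
  rw [Finset.mem_Icc] at hi
  exact (degree_C_mul_X_pow_le _ _).trans_lt (Nat.cast_lt.mpr (by omega))

lemma resultant_add_C_derivative {K : Type*} [Field K] [IsAlgClosed K] [CharZero K]
    {p : K[X]} (hp : p.Monic) (z : K) :
    resultant (p + C z) (derivative p) p.natDegree (p.natDegree - 1) =
      (p.natDegree : K) ^ p.natDegree *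
        ((derivative p).roots.map fun β => p.eval β + z).prod := by
  rw [resultant_comm, (Nat.even_mul_pred_self _).neg_one_pow, one_mul, ← natDegree_derivative,
    resultant_eq_prod_eval _ _ _ natDegree_add_C.le (IsAlgClosed.splits _),
    leadingCoeff_derivative, hp.leadingCoeff, one_mul]
  simp

lemma disc_eq_resultant {f : ℂ[X]} (hf : f.Monic) :
    disc f = (-1) ^ (f.natDegree * (f.natDegree - 1) / 2) *
      resultant f (derivative f) f.natDegree (f.natDegree - 1) := by
  rw [disc, resultant_eq_prod_eval _ _ _ (natDegree_derivative_le f) (IsAlgClosed.splits f),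
    hf.leadingCoeff, one_pow, one_mul]

/-- Here `p.map C + C X : R[X][X]` is `p + T` with the new constant `T` the variable of `R[X]`. -/
lemma eval_map_resultant_add_C {R S : Type*} [CommRing R] [CommRing S] (φ : R →+* S)
    (p : R[X]) (z : S) (m k : ℕ) :
    ((resultant (p.map C + C X) (derivative (p.map C + C X)) m k).map φ).eval z =
      resultant (p.map φ + C z) (derivative (p.map φ + C z)) m k := by
  have hF : (p.map C + C X).map (eval₂RingHom φ z) = p.map φ + C z := by
    rw [Polynomial.map_add, Polynomial.map_map, map_C]
    simp
  rw [eval_map, ← coe_eval₂RingHom, ← resultant_map_map, ← derivative_map, hF]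

noncomputable def discAddC (p : ℂ[X]) : ℂ[X] :=
  C ((-1) ^ (p.natDegree * (p.natDegree - 1) / 2) * (p.natDegree : ℂ) ^ p.natDegree) *
    ((derivative p).roots.map fun β => X + C (p.eval β)).prod

section discAddC

variable {p : ℂ[X]}

lemma eval_discAddC (hp : p.Monic) (hpos : 0 < p.natDegree) (z : ℂ) :
    (discAddC p).eval z = disc (p + C z) := by
  rw [disc_eq_resultant (hp.add_C hpos z), natDegree_add_C, derivative_add, derivative_C,
    add_zero, resultant_add_C_derivative hp, discAddC, eval_mul, eval_C, eval_multiset_prod,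
    Multiset.map_map]
  simp only [Function.comp_def, eval_add, eval_X, eval_C, add_comm z]
  ring

lemma natDegree_discAddC : (discAddC p).natDegree = p.natDegree - 1 := by
  rw [discAddC, natDegree_C_mul (by simp), natDegree_multiset_prod_of_monic _
    (Multiset.forall_mem_map_iff.mpr fun _ _ => monic_X_add_C _), Multiset.map_map]
  simp only [Function.comp_def, natDegree_X_add_C, Multiset.map_const', Multiset.sum_replicate,
    smul_eq_mul, mul_one, ← (IsAlgClosed.splits _).natDegree_eq_card_roots, natDegree_derivative]

lemma leadingCoeff_discAddC :
    (discAddC p).leadingCoeff =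
      (-1) ^ (p.natDegree * (p.natDegree - 1) / 2) * (p.natDegree : ℂ) ^ p.natDegree := by
  rw [discAddC, leadingCoeff_mul, leadingCoeff_C,
    (monic_multiset_prod_of_monic _ _ fun _ _ => monic_X_add_C _).leadingCoeff, mul_one]

end discAddC

section IntPolynomial

variable {p : ℤ[X]}

lemma exists_map_eq_discAddC (hp : p.Monic) (hpos : 0 < p.natDegree) :
    ∃ P : ℤ[X], P.map (Int.castRingHom ℂ) = discAddC (p.map (Int.castRingHom ℂ)) := by
  set n := p.natDegree
  let F : ℤ[X][X] := p.map C + C X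
  refine ⟨C ((-1) ^ (n * (n - 1) / 2)) * resultant F (derivative F) n (n - 1), ?_⟩
  have hmonic := hp.map (Int.castRingHom ℂ)
  have hdeg : (p.map (Int.castRingHom ℂ)).natDegree = n := hp.natDegree_map _
  refine Polynomial.funext fun z => ?_
  rw [eval_discAddC hmonic (hdeg ▸ hpos), disc_eq_resultant (hmonic.add_C (hdeg ▸ hpos) z),
    natDegree_add_C, hdeg, Polynomial.map_mul, eval_mul, eval_map_resultant_add_C]
  simp

theorem exists_intPoly_eval_eq_disc_add_C (hp : p.Monic) (hpos : 0 < p.natDegree) :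
    ∃ P : ℤ[X],
      (∀ t : ℤ, ((P.eval t : ℤ) : ℂ) = disc (p.map (Int.castRingHom ℂ) + C (t : ℂ))) ∧
      P.natDegree = p.natDegree - 1 ∧
      P.leadingCoeff =
        (-1) ^ (p.natDegree * (p.natDegree - 1) / 2) * (p.natDegree : ℤ) ^ p.natDegree := by
  have hdeg : (p.map (Int.castRingHom ℂ)).natDegree = p.natDegree := hp.natDegree_map _
  have hinj : Function.Injective (Int.castRingHom ℂ) := RingHom.injective_int _
  obtain ⟨P, hP⟩ := exists_map_eq_discAddC hp hpos
  refine ⟨P, fun t => ?_, ?_, ?_⟩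
  · rw [← eval_discAddC (hp.map _) (hdeg ▸ hpos), ← hP, eval_intCast_map, eq_intCast,
      Int.cast_id]
  · rw [← natDegree_map_eq_of_injective hinj, hP, natDegree_discAddC, hdeg]
  · apply Int.cast_injective (α := ℂ)
    rw [← eq_intCast (Int.castRingHom ℂ), ← leadingCoeff_map_of_injective hinj, hP,
      leadingCoeff_discAddC, hdeg]
    push_cast
    rfl

end IntPolynomial

/-- For `n ≥ 2` and fixed integers `a 1, ..., a (n-1)`, the discriminant
`Δ(a_1, ..., a_{n-1}, t)` of `X^n + a_1 X^{n-1} + ... + a_{n-1} X + t`, viewed as a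
polynomial in the single variable `t`, has degree `n - 1` and leading coefficient
`(-1)^{n(n-1)/2} n^n`. -/
theorem disc_degree_in_last_coeff (n : ℕ) (hn : 2 ≤ n) (a : ℕ → ℤ) :
    ∃ P : Polynomial ℤ,
      (∀ t : ℤ, ((P.eval t : ℤ) : ℂ) =
        disc (X ^ n + (∑ i ∈ Finset.Icc 1 (n - 1), C ((a i : ℂ)) * X ^ (n - i))
          + C ((t : ℤ) : ℂ))) ∧
      P.natDegree = n - 1 ∧
      P.leadingCoeff = (-1 : ℤ) ^ (n * (n - 1) / 2) * (n : ℤ) ^ n := by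
  set p : ℤ[X] := X ^ n + ∑ i ∈ Finset.Icc 1 (n - 1), C (a i) * X ^ (n - i)
  have hlow := degree_sum_C_mul_X_pow_sub_lt a n
  have hdeg : p.natDegree = n := by
    rw [natDegree_add_eq_left_of_degree_lt (by rwa [degree_X_pow]), natDegree_X_pow]
  have hmap : p.map (Int.castRingHom ℂ) =
      X ^ n + ∑ i ∈ Finset.Icc 1 (n - 1), C ((a i : ℂ)) * X ^ (n - i) := by
    simp [p, Polynomial.map_sum]
  have := exists_intPoly_eval_eq_disc_add_C (monic_X_pow_add hlow) (by omega : 0 < p.natDegree)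
  rwa [hmap, hdeg] at this
end

section
/- For n ≥ 2 and fixed a_1, ..., a_{n-2}, the discriminant Δ(a_{n-1}, a_n) of X^n + a_1 X^{n-1} + ... + a_{n-1} X + a_n, as a polynomial in the two variables a_{n-1} and a_n, equals (-1)^{(n-1)(n-2)/2} (n-1)^{n-1} a_{n-1}^n plus a polynomial of total degree strictly less than n in (a_{n-1}, a_n). -/
/-!
Let `F = X ^ n + ∑ i < n, x i * X ^ i` be the free monic polynomial and give `x i` the weight
`n - i`. Substituting `x i ↦ λ ^ (n - i) * x i` turns `F` into `λ ^ n * F (X / λ)`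
(`scaleRoots`), whose resultant with its derivative is `λ ^ (n * (n - 1))` times `Res(F, F')`;
hence `Res(F, F')`, which is `disc F` up to the sign `(-1) ^ (n * (n - 1) / 2)`, is weighted
homogeneous of weight `n * (n - 1)`.

Now fix `x i = a (n - i)` for `i ≥ 2` and put `x 1 = s`, `x 0 = t`. A monomial `s ^ p * t ^ q`
can only come from monomials of weight `n * (n - 1)`, which forces
`(n - 1) * p + n * q ≤ n * (n - 1)`, hence `p + q < n` unless the monomial is `x 1 ^ n` itself.
By homogeneity its coefficient is the value at `x = Pi.single 1 1`, i.e.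
`Res(X ^ n + X, n * X ^ (n - 1) + 1) = (1 - n) ^ (n - 1)`.
-/

open Polynomial

lemma Polynomial.derivative_scaleRoots {R : Type*} [CommSemiring R] [IsAddTorsionFree R]
    (p : R[X]) (r : R) : derivative (p.scaleRoots r) = (derivative p).scaleRoots r := by
  ext k
  simp only [coeff_derivative, coeff_scaleRoots, natDegree_derivative]
  rw [Nat.sub_sub, add_comm 1 k]
  ring

lemma Polynomial.resultant_X_pow_add_X_derivative (R : Type*) [CommRing R] [Nontrivial R]
    (n : ℕ) :
    resultant (X ^ (n + 2) + X : R[X]) (derivative (X ^ (n + 2) + X)) (n + 2) (n + 1) =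
      (-(n + 1 : R)) ^ (n + 1) := by
  have hf : (X ^ (n + 2) + X : R[X]) = X * (X ^ (n + 1) + 1) := by ring
  have hf' : derivative (X ^ (n + 2) + X : R[X]) =
      C (-(n + 1 : R)) + (X ^ (n + 1) + 1) * C (n + 2 : R) := by
    rw [derivative_add, derivative_X_pow, derivative_X]
    simp only [map_neg, map_add, map_natCast, map_ofNat, map_one]
    push_cast
    ring
  have hdeg : (X ^ (n + 1) + 1 : R[X]).natDegree = n + 1 := by
    rw [natDegree_add_eq_left_of_natDegree_lt] <;> simp
  have hdeg' : (derivative (X ^ (n + 2) + X : R[X])).natDegree ≤ n + 1 := by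
    refine (natDegree_derivative_le _).trans (le_of_eq ?_)
    rw [natDegree_add_eq_left_of_natDegree_lt] <;> simp
  have hmul := resultant_mul_left X (X ^ (n + 1) + 1) _ _ hdeg'
  rw [natDegree_X, hdeg, ← hf, add_comm 1] at hmul
  have hX := resultant_X_sub_C_left _ _ 0 hdeg'
  rw [map_zero, sub_zero] at hX
  rw [hmul, hX, hf', resultant_add_mul_right _ _ _ _ _ (by simp) hdeg.le, resultant_C_right]
  norm_num [coeff_one]

namespace MvPolynomial

variable {σ τ R : Type*} [CommSemiring R]

noncomputable def weightScaling (w : σ → ℕ) :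
    MvPolynomial σ R →ₐ[R] (MvPolynomial σ R)[X] :=
  aeval fun i => Polynomial.C (X i) * Polynomial.X ^ w i

lemma coeff_weightScaling (w : σ → ℕ) (φ : MvPolynomial σ R) (k : ℕ) :
    (weightScaling w φ).coeff k = weightedHomogeneousComponent w k φ := by
  classical
  induction φ using MvPolynomial.induction_on' with
  | monomial d r =>
    have hmon : weightScaling w (monomial d r) =
        Polynomial.C (monomial d r) * Polynomial.X ^ Finsupp.weight w d := by
      simp only [weightScaling, aeval_monomial, mul_pow, Finsupp.prod, Finset.prod_mul_distrib,
        ← pow_mul, Finset.prod_pow_eq_pow_sum, Finsupp.weight_apply, Finsupp.sum]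
      rw [monomial_eq, Finsupp.prod, map_mul, map_prod, Polynomial.algebraMap_apply]
      simp only [map_pow, smul_eq_mul, mul_comm, algebraMap_eq]
      ring
    ext d'
    rw [hmon, coeff_C_mul_X_pow, coeff_weightedHomogeneousComponent, coeff_monomial,
      apply_ite (coeff d'), coeff_monomial, coeff_zero]
    split_ifs <;> grind
  | add p q hp hq => simp [hp, hq]

lemma isWeightedHomogeneous_of_weightScaling_eq {w : σ → ℕ} {φ : MvPolynomial σ R} {m : ℕ}
    (h : weightScaling w φ = Polynomial.C φ * Polynomial.X ^ m) :
    IsWeightedHomogeneous w φ m := by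
  have hm := congrArg (Polynomial.coeff · m) h
  simp only [coeff_weightScaling, coeff_C_mul_X_pow, if_pos] at hm
  exact hm ▸ weightedHomogeneousComponent_isWeightedHomogeneous _ _

lemma IsWeightedHomogeneous.eval_piSingle_one [DecidableEq σ] {w : σ → ℕ}
    {φ : MvPolynomial σ R} {m : ℕ} (hφ : IsWeightedHomogeneous w φ m) {i : σ} {k : ℕ}
    (hk : w i * k = m) (hi : w i ≠ 0) :
    eval (Pi.single i 1) φ = coeff (Finsupp.single i k) φ := by
  rw [eval_eq, Finset.sum_eq_single (Finsupp.single i k)]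
  · rw [Finset.prod_eq_one, mul_one]
    intro j hj
    rw [((Finsupp.mem_support_single _ _ _).mp hj).1, Pi.single_eq_same, one_pow]
  · intro d hd hne
    obtain ⟨j, hj, hji⟩ : ∃ j ∈ d.support, j ≠ i := by
      by_contra! h
      have hd' := Finsupp.support_subset_singleton.mp fun j hj => Finset.mem_singleton.mpr (h j hj)
      have hw := hφ (mem_support_iff.mp hd)
      rw [hd', Finsupp.weight_single, smul_eq_mul, mul_comm, ← hk] at hw
      exact hne (hd'.trans (by rw [Nat.eq_of_mul_eq_mul_left (Nat.pos_of_ne_zero hi) hw]))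
    rw [Finset.prod_eq_zero hj
      (by rw [Pi.single_eq_of_ne hji, zero_pow (Finsupp.mem_support_iff.mp hj)]), mul_zero]
  · intro h
    rw [notMem_support_iff.mp h, zero_mul]

lemma totalDegree_aeval_le (g : σ → MvPolynomial τ R) (e : σ → ℕ)
    (hg : ∀ i, (g i).totalDegree ≤ e i) {φ : MvPolynomial σ R} {N : ℕ}
    (hφ : ∀ d ∈ φ.support, Finsupp.weight e d ≤ N) : (aeval g φ).totalDegree ≤ N := by
  rw [φ.as_sum, map_sum]
  refine totalDegree_finsetSum_le fun d hd => ?_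
  rw [aeval_monomial, algebraMap_eq]
  refine (totalDegree_mul _ _).trans ?_
  rw [totalDegree_C, zero_add]
  refine (totalDegree_finsetProd _ _).trans ((Finset.sum_le_sum fun i _ => ?_).trans
    (le_of_eq_of_le (Finsupp.weight_apply _ _).symm (hφ d hd)))
  exact (totalDegree_pow _ _).trans (Nat.mul_le_mul_left _ (hg i))

end MvPolynomial

section FreeMonic

open MvPolynomial (weightScaling)

variable (R : Type*) [CommRing R]

lemma Polynomial.freeMonic_map_weightScaling [Nontrivial R] (n : ℕ) :
    (freeMonic R n).map (weightScaling (R := R) (fun i : Fin n => n - (i : ℕ)) :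
        MvPolynomial (Fin n) R →+* (MvPolynomial (Fin n) R)[X]) =
      ((freeMonic R n).map C).scaleRoots X := by
  ext k : 1
  rw [Polynomial.coeff_map, coeff_scaleRoots, Polynomial.coeff_map,
    natDegree_map_eq_of_injective C_injective, natDegree_freeMonic, coeff_freeMonic]
  split_ifs with hk hkn
  · simp [weightScaling]
  · simp [hkn]
  · simp

lemma Polynomial.freeMonic_map_eval_piSingle_one (n : ℕ) :
    (freeMonic R (n + 2)).map (MvPolynomial.eval (Pi.single 1 1)) = X ^ (n + 2) + X := by
  simp [freeMonic, Polynomial.map_sum, Pi.single_apply]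

noncomputable def resultantDerivFreeMonic (n : ℕ) : MvPolynomial (Fin n) R :=
  resultant (freeMonic R n) (derivative (freeMonic R n)) n (n - 1)

variable [IsDomain R] [CharZero R]

lemma isWeightedHomogeneous_resultantDerivFreeMonic (n : ℕ) :
    MvPolynomial.IsWeightedHomogeneous (fun i : Fin n => n - (i : ℕ))
      (resultantDerivFreeMonic R n) (n * (n - 1)) := by
  apply MvPolynomial.isWeightedHomogeneous_of_weightScaling_eq
  have hG : ((freeMonic R n).map (C (R := MvPolynomial (Fin n) R))).natDegree = n := by
    rw [natDegree_map_eq_of_injective C_injective, natDegree_freeMonic]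
  have key := resultant_scaleRoots ((freeMonic R n).map C)
    (derivative ((freeMonic R n).map C)) X
  rw [natDegree_scaleRoots, natDegree_scaleRoots, natDegree_derivative, hG,
    ← derivative_scaleRoots, derivative_map, resultant_map_map] at key
  rw [resultantDerivFreeMonic, ← AlgHom.coe_toRingHom, ← resultant_map_map, ← derivative_map,
    freeMonic_map_weightScaling, key, mul_comm]

lemma coeff_single_resultantDerivFreeMonic (n : ℕ) :
    MvPolynomial.coeff (Finsupp.single 1 (n + 2)) (resultantDerivFreeMonic R (n + 2)) =
      (-(n + 1 : R)) ^ (n + 1) := by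
  rw [← (isWeightedHomogeneous_resultantDerivFreeMonic R (n + 2)).eval_piSingle_one
    (by simp; ring) (by simp), resultantDerivFreeMonic, ← resultant_map_map, ← derivative_map,
    freeMonic_map_eval_piSingle_one]
  exact resultant_X_pow_add_X_derivative R n

end FreeMonic

lemma disc_map_freeMonic {n : ℕ} (χ : MvPolynomial (Fin n) ℤ →+* ℂ) :
    disc ((freeMonic ℤ n).map χ) =
      (-1) ^ (n * (n - 1) / 2) * χ (resultantDerivFreeMonic ℤ n) := by
  rw [disc_eq_resultant ((monic_freeMonic ℤ n).map χ), (monic_freeMonic ℤ n).natDegree_map,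
    natDegree_freeMonic, resultantDerivFreeMonic, ← resultant_map_map, derivative_map]

lemma Int.neg_one_pow_mul_neg_succ_pow (m : ℕ) :
    (-1 : ℤ) ^ ((m + 2) * (m + 1) / 2) * (-(m + 1 : ℤ)) ^ (m + 1) =
      (-1) ^ ((m + 1) * m / 2) * (m + 1) ^ (m + 1) := by
  have hexp : (m + 2) * (m + 1) / 2 = (m + 1) * m / 2 + (m + 1) := by
    rw [show (m + 2) * (m + 1) = (m + 1) * m + (m + 1) * 2 by ring,
      Nat.add_mul_div_right _ _ two_pos]
  have hsq : (-1 : ℤ) ^ (m + 1) * (-1) ^ (m + 1) = 1 := by rw [← mul_pow]; norm_num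
  rw [hexp, pow_add, neg_pow (m + 1 : ℤ)]
  linear_combination (-1 : ℤ) ^ ((m + 1) * m / 2) * (m + 1 : ℤ) ^ (m + 1) * hsq

lemma Finset.sum_Icc_one_eq_sum_range_reflect {M : Type*} [AddCommMonoid M] (m : ℕ)
    (h : ℕ → M) :
    ∑ i ∈ Finset.Icc 1 m, h i = ∑ j ∈ Finset.range m, h (m - j) := by
  refine Finset.sum_nbij' (fun i => m - i) (fun j => m - j) ?_ ?_ ?_ ?_ ?_ <;>
    intro i hi <;> simp only [Finset.mem_Icc, Finset.mem_range] at hi ⊢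
  any_goals omega
  rw [Nat.sub_sub_self hi.2]

lemma Finsupp.weight_cons_one_cons_one_lt {m : ℕ} {d : Fin (m + 2) →₀ ℕ}
    (hd : Finsupp.weight (fun i : Fin (m + 2) => m + 2 - (i : ℕ)) d = (m + 2) * (m + 2 - 1))
    (hne : d ≠ Finsupp.single 1 (m + 2)) :
    Finsupp.weight (Fin.cons 1 (Fin.cons 1 0) : Fin (m + 2) → ℕ) d < m + 2 := by
  have hw : ∀ j : Fin m, m + 2 - ((j : ℕ) + 1 + 1) = m - j := fun j => by omega
  rw [Finsupp.weight_apply, Finsupp.sum_fintype _ _ (by simp)] at hd ⊢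
  simp only [Fin.sum_univ_succ, smul_eq_mul, Fin.cons_zero, Fin.cons_succ, Pi.zero_apply, mul_zero,
    Finset.sum_const_zero, Fin.val_zero, Fin.val_succ, mul_one, add_zero, Nat.sub_zero, zero_add,
    hw, Fin.succ_zero_eq_one] at hd ⊢
  rw [show m + 2 - 1 = m + 1 by omega] at hd
  have hrest : ∑ j : Fin m, d j.succ.succ ≤ ∑ j : Fin m, d j.succ.succ * (m - j) :=
    Finset.sum_le_sum fun j _ => Nat.le_mul_of_pos_right _ (by omega)
  generalize ∑ j : Fin m, d j.succ.succ * (m - j) = R at hd hrest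
  by_contra hge
  have h1 := Nat.mul_le_mul_left (m + 1) (not_lt.mp hge)
  have hd0 : d 0 = 0 := by nlinarith
  have hd1 : d 1 = m + 2 := Nat.eq_of_mul_eq_mul_left (by omega : 0 < m + 1) (by nlinarith)
  have hR : R = 0 := by nlinarith
  have hdj : ∀ j : Fin m, d j.succ.succ = 0 := fun j =>
    Finset.sum_eq_zero_iff.mp (Nat.le_zero.mp (hR ▸ hrest)) j (Finset.mem_univ j)
  refine hne (Finsupp.ext fun i => Fin.cases ?_ (Fin.cases ?_ fun j => ?_) i)
  · simp [hd0]
  · simp [hd1]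
  · simp [hdj, Fin.ext_iff]

/-- `X i` is the coefficient of `X ^ i` in `freeMonic`: it is sent to `t` for `i = 0`, to `s` for
`i = 1`, and to the fixed value `a (m + 2 - i)` otherwise. -/
noncomputable def freeLastTwoCoeffs (a : ℕ → ℤ) (m : ℕ) :
    Fin (m + 2) → MvPolynomial (Fin 2) ℤ :=
  Fin.cons (MvPolynomial.X 1) <|
    Fin.cons (MvPolynomial.X 0) fun j : Fin m => MvPolynomial.C (a (m - j))

lemma map_freeMonic_freeLastTwoCoeffs (a : ℕ → ℤ) (m : ℕ) (s t : ℤ) :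
    (freeMonic ℤ (m + 2)).map ((Int.castRingHom ℂ).comp
        ((MvPolynomial.eval ![s, t]).comp (MvPolynomial.aeval (freeLastTwoCoeffs a m)).toRingHom)) =
      X ^ (m + 2) + (∑ i ∈ Finset.Icc 1 m, C ((a i : ℂ)) * X ^ (m + 2 - i))
          + C ((s : ℤ) : ℂ) * X + C ((t : ℤ) : ℂ) := by
  rw [Finset.sum_Icc_one_eq_sum_range_reflect, ← Fin.sum_univ_eq_sum_range]
  simp [freeMonic, Polynomial.map_sum, Fin.sum_univ_succ, freeLastTwoCoeffs, add_comm,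
    add_left_comm]

lemma aeval_freeLastTwoCoeffs_monomial (a : ℕ → ℤ) (m : ℕ) (c : ℤ) :
    MvPolynomial.aeval (freeLastTwoCoeffs a m)
        (MvPolynomial.monomial (Finsupp.single 1 (m + 2)) c) =
      MvPolynomial.C c * MvPolynomial.X 0 ^ (m + 2) := by
  rw [MvPolynomial.aeval_monomial, Finsupp.prod_single_index (by simp), MvPolynomial.algebraMap_eq]
  rfl

lemma totalDegree_freeLastTwoCoeffs_le (a : ℕ → ℤ) (m : ℕ) (i : Fin (m + 2)) :
    (freeLastTwoCoeffs a m i).totalDegree ≤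
      (Fin.cons 1 (Fin.cons 1 0) : Fin (m + 2) → ℕ) i := by
  refine Fin.cases ?_ (Fin.cases ?_ fun j => ?_) i
  · simp [freeLastTwoCoeffs]
  · simp [freeLastTwoCoeffs]
  · simp only [freeLastTwoCoeffs, Fin.cons_succ, MvPolynomial.totalDegree_C, Pi.zero_apply,
      le_refl]

lemma totalDegree_aeval_freeLastTwoCoeffs_lt (a : ℕ → ℤ) {m : ℕ}
    {φ : MvPolynomial (Fin (m + 2)) ℤ}
    (hφ : φ.IsWeightedHomogeneous (fun i : Fin (m + 2) => m + 2 - (i : ℕ))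
      ((m + 2) * (m + 2 - 1))) :
    (MvPolynomial.aeval (freeLastTwoCoeffs a m) (φ - MvPolynomial.monomial
      (Finsupp.single 1 (m + 2)) (φ.coeff (Finsupp.single 1 (m + 2))))).totalDegree < m + 2 := by
  refine Nat.lt_succ_iff.mpr (MvPolynomial.totalDegree_aeval_le _ _
    (totalDegree_freeLastTwoCoeffs_le a m) fun d hd => ?_)
  have hcoeff := MvPolynomial.mem_support_iff.mp hd
  have hne : d ≠ Finsupp.single 1 (m + 2) := by
    rintro rfl
    simp at hcoeff
  rw [MvPolynomial.coeff_sub, MvPolynomial.coeff_monomial, if_neg hne.symm, sub_zero] at hcoeff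
  exact Nat.lt_succ_iff.mp (Finsupp.weight_cons_one_cons_one_lt (hφ hcoeff) hne)

/-- For `n ≥ 2` and fixed integers `a 1, ..., a (n-2)`, the discriminant
`Δ(a_{n-1}, a_n)` of `X^n + a_1 X^{n-1} + ... + a_{n-1} X + a_n`, as a polynomial in the
two variables `a_{n-1}` (variable `0`) and `a_n` (variable `1`), equals
`(-1)^{(n-1)(n-2)/2} (n-1)^{n-1} a_{n-1}^n` plus a polynomial of total degree `< n`. -/
theorem disc_shape_in_last_two_coeffs (n : ℕ) (hn : 2 ≤ n) (a : ℕ → ℤ) :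
    ∃ P Φ : MvPolynomial (Fin 2) ℤ,
      (∀ s t : ℤ, ((MvPolynomial.eval ![s, t] P : ℤ) : ℂ) =
        disc (X ^ n + (∑ i ∈ Finset.Icc 1 (n - 2), C ((a i : ℂ)) * X ^ (n - i))
          + C ((s : ℤ) : ℂ) * X + C ((t : ℤ) : ℂ))) ∧
      P = MvPolynomial.C ((-1 : ℤ) ^ ((n - 1) * (n - 2) / 2) * ((n - 1 : ℕ) : ℤ) ^ (n - 1)) *
            (MvPolynomial.X 0) ^ n + Φ ∧
      Φ.totalDegree < n := by
  obtain ⟨m, rfl⟩ : ∃ m, n = m + 2 := ⟨n - 2, by omega⟩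
  set D := resultantDerivFreeMonic ℤ (m + 2)
  set d₀ : Fin (m + 2) →₀ ℕ := Finsupp.single 1 (m + 2)
  set π := MvPolynomial.aeval (R := ℤ) (freeLastTwoCoeffs a m)
  set ε : ℤ := (-1) ^ ((m + 2) * (m + 2 - 1) / 2)
  refine ⟨MvPolynomial.C ε * π D,
    MvPolynomial.C ε * π (D - MvPolynomial.monomial d₀ (D.coeff d₀)), fun s t => ?_, ?_, ?_⟩
  · rw [Nat.add_sub_cancel, ← map_freeMonic_freeLastTwoCoeffs, disc_map_freeMonic, map_mul,
      MvPolynomial.eval_C, Int.cast_mul]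
    push_cast [ε]
    rfl
  · have hc : (-1 : ℤ) ^ ((m + 2 - 1) * (m + 2 - 2) / 2) *
        ((m + 2 - 1 : ℕ) : ℤ) ^ (m + 2 - 1) = ε * (-(m + 1 : ℤ)) ^ (m + 1) := by
      simp only [ε, Nat.add_sub_cancel]
      push_cast
      exact (Int.neg_one_pow_mul_neg_succ_pow m).symm
    rw [map_sub, mul_sub, aeval_freeLastTwoCoeffs_monomial, coeff_single_resultantDerivFreeMonic,
      hc, map_mul]
    ring
  · refine (MvPolynomial.totalDegree_mul _ _).trans_lt ?_
    rw [MvPolynomial.totalDegree_C, zero_add]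
    exact totalDegree_aeval_freeLastTwoCoeffs_lt a
      (isWeightedHomogeneous_resultantDerivFreeMonic ℤ _)
end

section
/- Let K be an algebraic extension of ℚ. Then the discriminant Δ(p, q) of X^n + pX + q, as a polynomial in the two variables p and q, is not a square in the polynomial ring K[p, q], for any n ≥ 3. -/
open MvPolynomial

/-- Let `K` be an algebraic extension of `ℚ`. For `n ≥ 3`, the discriminant
`Δ(p, q) = (-1)^{n(n-1)/2} n^n q^{n-1} + (-1)^{(n-1)(n-2)/2} (n-1)^{n-1} p^n` of
`X^n + pX + q`, as a polynomial in the two variables `p` (variable `0`) and `q`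
(variable `1`), is not a square in the polynomial ring `K[p, q]`. -/
theorem trinomial_disc_not_square (K : Type*) [Field K] [Algebra ℚ K]
    [Algebra.IsAlgebraic ℚ K] (n : ℕ) (hn : 3 ≤ n) :
    ¬ ∃ f : MvPolynomial (Fin 2) K,
      f ^ 2 =
        C ((-1 : K) ^ (n * (n - 1) / 2) * (n : K) ^ n) * (X 1) ^ (n - 1) +
          C ((-1 : K) ^ ((n - 1) * (n - 2) / 2) * ((n - 1 : ℕ) : K) ^ (n - 1)) * (X 0) ^ n := by
  have hchar : CharZero K := charZero_of_injective_algebraMap (algebraMap ℚ K).injective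
  rintro ⟨f, hf⟩
  rcases Nat.even_or_odd n with he | ho
  · -- n even: specialize p ↦ 0, q ↦ t, get g² = a t^(n-1) with n-1 odd
    have ha : (-1 : K) ^ (n * (n - 1) / 2) * (n : K) ^ n ≠ 0 := by
      apply mul_ne_zero
      · exact pow_ne_zero _ (by norm_num)
      · exact pow_ne_zero _ (Nat.cast_ne_zero.mpr (by omega))
    set φ : MvPolynomial (Fin 2) K →+* Polynomial K :=
      (aeval ![0, Polynomial.X] : MvPolynomial (Fin 2) K →ₐ[K] Polynomial K).toRingHom with hφ
    have h0 : φ (X 0) = 0 := by simp [hφ]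
    have h1 : φ (X 1) = Polynomial.X := by simp [hφ]
    have hC : ∀ c : K, φ (C c) = Polynomial.C c := by intro c; simp [hφ]
    have key : (φ f) ^ 2 = Polynomial.C ((-1 : K) ^ (n * (n - 1) / 2) * (n : K) ^ n)
        * Polynomial.X ^ (n - 1) := by
      rw [← map_pow, hf]
      simp only [map_add, map_mul, map_pow, h0, h1, hC]
      rw [zero_pow (show n ≠ 0 by omega)]
      ring
    have hdeg : (φ f ^ 2).natDegree = n - 1 := by
      rw [key, Polynomial.natDegree_C_mul_X_pow _ _ ha]
    rw [Polynomial.natDegree_pow] at hdeg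
    rcases he with ⟨k, hk⟩
    omega
  · -- n odd: specialize p ↦ t, q ↦ 0, get g² = b t^n with n odd
    have hb : (-1 : K) ^ ((n - 1) * (n - 2) / 2) * ((n - 1 : ℕ) : K) ^ (n - 1) ≠ 0 := by
      apply mul_ne_zero
      · exact pow_ne_zero _ (by norm_num)
      · exact pow_ne_zero _ (Nat.cast_ne_zero.mpr (by omega))
    set φ : MvPolynomial (Fin 2) K →+* Polynomial K :=
      (aeval ![Polynomial.X, 0] : MvPolynomial (Fin 2) K →ₐ[K] Polynomial K).toRingHom with hφ
    have h0 : φ (X 0) = Polynomial.X := by simp [hφ]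
    have h1 : φ (X 1) = 0 := by simp [hφ]
    have hC : ∀ c : K, φ (C c) = Polynomial.C c := by intro c; simp [hφ]
    have key : (φ f) ^ 2 = Polynomial.C ((-1 : K) ^ ((n - 1) * (n - 2) / 2)
        * ((n - 1 : ℕ) : K) ^ (n - 1)) * Polynomial.X ^ n := by
      rw [← map_pow, hf]
      simp only [map_add, map_mul, map_pow, h0, h1, hC]
      rw [zero_pow (show n - 1 ≠ 0 by omega)]
      ring
    have hdeg : (φ f ^ 2).natDegree = n := by
      rw [key, Polynomial.natDegree_C_mul_X_pow _ _ hb]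
    rw [Polynomial.natDegree_pow] at hdeg
    rcases ho with ⟨k, hk⟩
    omega
end

section
/- Let n ≥ 3. The three-variable polynomial z² − Δ(0, ..., 0, p, q) = z² − ((-1)^{n(n-1)/2} n^n q^{n-1} + (-1)^{(n-1)(n-2)/2} (n-1)^{n-1} p^n) is absolutely irreducible, i.e., irreducible over any algebraic closure of ℚ. -/
/-!
In the integrally closed ring `R = K[p, q]`, a monic `z² − f` is irreducible as soon as `f` is not
a square in `R`: by Gauss's lemma it suffices to work over `Frac R`, and a square root of `f` there
is integral over `R`. Here `f = a q^(n-1) + b p^n` with `a b ≠ 0`, and one of `n − 1`, `n` is odd;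
killing the other variable maps `f` to a monomial of odd degree in `K[t]`, which is not a square.
-/

open MvPolynomial

namespace Polynomial

theorem not_isSquare_of_odd_natDegree {R : Type*} [Semiring R] [NoZeroDivisors R] {f : R[X]}
    (hf : Odd f.natDegree) : ¬IsSquare f := by
  rintro ⟨g, rfl⟩
  rw [← sq, natDegree_pow, Nat.odd_iff] at hf
  omega

theorem X_pow_sub_C_irreducible_of_prime_of_isIntegrallyClosed {R : Type*} [CommRing R]
    [IsDomain R] [IsIntegrallyClosed R] {p : ℕ} (hp : p.Prime) {a : R}
    (ha : ∀ b : R, b ^ p ≠ a) : Irreducible (X ^ p - C a) := by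
  have hmonic := monic_X_pow_sub_C a hp.ne_zero
  rw [hmonic.irreducible_iff_irreducible_map_fraction_map (K := FractionRing R),
    Polynomial.map_sub, Polynomial.map_pow, map_X, map_C]
  refine X_pow_sub_C_irreducible_of_prime hp fun y hy ↦ ?_
  have hint : IsIntegral R y :=
    ⟨X ^ p - C a, hmonic, by simp [eval₂_sub, hy, Algebra.algebraMap_eq_smul_one]⟩
  obtain ⟨b, rfl⟩ := IsIntegrallyClosed.isIntegral_iff.mp hint
  exact ha b (IsFractionRing.injective R (FractionRing R) (by rw [map_pow, hy]))

end Polynomial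

namespace MvPolynomial

theorem not_isSquare_C_mul_X_pow_add_C_mul_X_pow {R σ : Type*} [CommSemiring R]
    [NoZeroDivisors R] {i j : σ} (hij : i ≠ j) {a : R} (ha : a ≠ 0) (b : R) {m k : ℕ}
    (hm : Odd m) (hk : k ≠ 0) : ¬IsSquare (C a * X i ^ m + C b * X j ^ k) := by
  classical
  intro h
  have := h.map (aeval (Pi.single i (Polynomial.X : Polynomial R)))
  simp only [map_add, map_mul, algHom_C, Polynomial.algebraMap_eq, map_pow, aeval_X,
    Pi.single_eq_same, Pi.single_eq_of_ne hij.symm, zero_pow hk, mul_zero, add_zero] at this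
  exact Polynomial.not_isSquare_of_odd_natDegree
    (by rwa [Polynomial.natDegree_C_mul_X_pow _ _ ha]) this

end MvPolynomial

theorem z_sq_sub_trinomial_disc_abs_irreducible_general (K : Type*) [Field K]
    [CharZero K] (n : ℕ) (hn : 3 ≤ n) :
    Irreducible
      ((X 0 : MvPolynomial (Fin 3) K) ^ 2 -
        (C ((-1 : K) ^ (n * (n - 1) / 2) * (n : K) ^ n) * (X 2) ^ (n - 1) +
          C ((-1 : K) ^ ((n - 1) * (n - 2) / 2) * ((n - 1 : ℕ) : K) ^ (n - 1)) * (X 1) ^ n)) := by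
  set a : K := (-1) ^ (n * (n - 1) / 2) * (n : K) ^ n
  set b : K := (-1) ^ ((n - 1) * (n - 2) / 2) * ((n - 1 : ℕ) : K) ^ (n - 1)
  have ha : a ≠ 0 := by simp [a]
  have hb : b ≠ 0 := by simp [b]
  set f : MvPolynomial (Fin 2) K := C a * X 1 ^ (n - 1) + C b * X 0 ^ n
  have hf : ¬IsSquare f := by
    rcases Nat.even_or_odd n with hev | hodd
    · exact not_isSquare_C_mul_X_pow_add_C_mul_X_pow (by decide) ha b
        (Nat.Even.sub_odd (by omega) hev odd_one) (by omega)
    · rw [show f = C b * X 0 ^ n + C a * X 1 ^ (n - 1) from add_comm _ _]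
      exact not_isSquare_C_mul_X_pow_add_C_mul_X_pow (by decide) hb a hodd (by omega)
  have hirr := Polynomial.X_pow_sub_C_irreducible_of_prime_of_isIntegrallyClosed Nat.prime_two
    (a := f) fun g hg ↦ hf ⟨g, by rw [← hg, sq]⟩
  rw [← MulEquiv.irreducible_iff (finSuccEquiv K 2)]
  convert hirr
  rw [show (2 : Fin 3) = Fin.succ 1 from rfl, show (1 : Fin 3) = Fin.succ 0 from rfl]
  simp only [f, map_sub, map_add, map_mul, map_pow, finSuccEquiv_X_zero, finSuccEquiv_X_succ,
    ← algebraMap_eq, AlgEquiv.commutes, Polynomial.algebraMap_apply]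

/-- Let `n ≥ 3`. The three-variable polynomial
`z² − ((-1)^{n(n-1)/2} n^n q^{n-1} + (-1)^{(n-1)(n-2)/2} (n-1)^{n-1} p^n)`
(where `z` is variable `0`, `p` is variable `1`, `q` is variable `2`, and the subtracted
polynomial is the discriminant of the trinomial `X^n + pX + q`) is absolutely irreducible,
i.e. irreducible over any algebraically closed field of characteristic zero, in particular
over any algebraic closure of `ℚ`. -/
theorem z_sq_sub_trinomial_disc_abs_irreducible (K : Type*) [Field K] [IsAlgClosed K]
    [CharZero K] (n : ℕ) (hn : 3 ≤ n) :
    Irreducible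
      ((X 0 : MvPolynomial (Fin 3) K) ^ 2 -
        (C ((-1 : K) ^ (n * (n - 1) / 2) * (n : K) ^ n) * (X 2) ^ (n - 1) +
          C ((-1 : K) ^ ((n - 1) * (n - 2) / 2) * ((n - 1 : ℕ) : K) ^ (n - 1)) * (X 1) ^ n)) :=
  z_sq_sub_trinomial_disc_abs_irreducible_general K n hn
end

section
/- If G is a subgroup of S_n with n ≥ 5 and G is neither S_n nor A_n, then the index [S_n : G] is at least n. -/
/-!
If `[Sₙ : G] < n`, the action of `Sₙ` on the cosets of `G` has a kernel of index dividing
`[Sₙ : G]! < n!`, so the normal core of `G` is a nontrivial normal subgroup of `Sₙ`. For `n ≥ 5`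
every such subgroup contains `Aₙ`, hence `Aₙ ≤ G`, and the only subgroups containing `Aₙ`
(which has index 2) are `Aₙ` and `Sₙ`.
-/

open Nat Subgroup

theorem Subgroup.index_normalCore_dvd_factorial {G : Type*} [Group G] (H : Subgroup G)
    [H.FiniteIndex] : H.normalCore.index ∣ H.index ! := by
  rw [normalCore_eq_ker, index_ker, index_eq_card, ← Nat.card_perm]
  exact card_subgroup_dvd_card _

theorem Subgroup.nontrivial_normalCore_of_factorial_index_lt {G : Type*} [Group G]
    (H : Subgroup G) [H.FiniteIndex] (h : H.index ! < Nat.card G) :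
    Nontrivial H.normalCore := by
  rw [nontrivial_iff_ne_bot]
  intro hbot
  have hdvd := H.index_normalCore_dvd_factorial
  rw [hbot, index_bot] at hdvd
  exact h.not_ge (Nat.le_of_dvd H.index.factorial_pos hdvd)

namespace Equiv.Perm

variable {α : Type*} [Fintype α] [DecidableEq α]

theorem alternatingGroup_le_of_index_lt_card {G : Subgroup (Perm α)} (hα : 5 ≤ Nat.card α)
    (hG : G.index < Nat.card α) : alternatingGroup α ≤ G := by
  have : Nontrivial G.normalCore := G.nontrivial_normalCore_of_factorial_index_lt <| by
    rw [Nat.card_perm]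
    exact (Nat.factorial_lt (Nat.pos_of_ne_zero index_ne_zero_of_finite)).2 hG
  exact (alternatingGroup_le_of_normal hα this).trans G.normalCore_le

theorem eq_top_or_eq_alternatingGroup_of_le {G : Subgroup (Perm α)}
    (hG : alternatingGroup α ≤ G) : G = ⊤ ∨ G = alternatingGroup α := by
  rcases subsingleton_or_nontrivial α with _ | _
  · exact .inl (Subsingleton.elim _ _)
  have hdvd : G.index ∣ 2 := alternatingGroup.index_eq_two (α := α) ▸ index_dvd_of_le hG
  rcases (Nat.dvd_prime Nat.prime_two).1 hdvd with h | h
  · exact .inl (index_eq_one.1 h)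
  · exact .inr (eq_alternatingGroup_of_index_eq_two h)

end Equiv.Perm

/-- If `G` is a subgroup of `Sₙ` with `n ≥ 5` which is neither `Sₙ` nor the
alternating group `Aₙ`, then the index `[Sₙ : G]` is at least `n`. -/
theorem index_ge_of_ne_symmetric_ne_alternating (n : ℕ) (hn : 5 ≤ n)
    (G : Subgroup (Equiv.Perm (Fin n))) (hG₁ : G ≠ ⊤)
    (hG₂ : G ≠ alternatingGroup (Fin n)) :
    n ≤ G.index := by
  by_contra! hG
  have hA : alternatingGroup (Fin n) ≤ G :=
    Equiv.Perm.alternatingGroup_le_of_index_lt_card (by simpa) (by simpa)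
  exact (Equiv.Perm.eq_top_or_eq_alternatingGroup_of_le hA).elim hG₁ hG₂
end
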